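/- Partial sums of discretized composite Haar functions grow at most geometrically in the index: there exists a finite constant C > 0 such that for every sample size T ≥ 1 and every k ≥ 1, |∑_{t=1}^{T} Ψ_k(t)| ≤ C · 2^k, where Ψ_k(t) = ψ_k((t-1)/T). Hence the discrete-basis summand bound of Assumption 1.d holds for the composite Haar basis with η(k) = 2^k. -/

import Mathlib

/-- The Haar mother wavelet: `ψ(x) = 1` on `[0,1/2)`, `-1` on `[1/2,1)`, and `0` otherwise. -/
noncomputable def haarMother (x : ℝ) : ℝ :=
  if 0 ≤ x ∧ x < 1/2 then 1 else if 1/2 ≤ x ∧ x < 1 then -1 else 0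

/-- The composite Haar functions: `ψ_0(x) = 1` on `[0,1)`, and
`ψ_{k+1}(x) = ∑_{m=0}^{2^k - 1} ψ(2^k x - m)`. -/
noncomputable def haarComposite : ℕ → ℝ → ℝ
  | 0, _ => 1
  | k + 1, x => ∑ m ∈ Finset.range (2 ^ k), haarMother (2 ^ k * x - m)

/-!
On the sample points `n / T`, the translate `ψ(2^j x - m)` is `+1` on the naturals of
`[α, β)` and `-1` on those of `[β, γ)`, where `α = m T / 2^j`, `γ = (m + 1) T / 2^j` and
`β = (α + γ) / 2`. The two counts are `⌈β⌉ - ⌈α⌉` and `⌈γ⌉ - ⌈β⌉`, whose difference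
`2⌈β⌉ - ⌈α⌉ - ⌈γ⌉` is an integer in `(-2, 2)`. So each of the `2^j` translates contributes
at most `1` to the partial sum of `Ψ_{j+1}`, which is therefore at most `2^j`.
-/

open Finset

section LinearOrderedField

variable {K : Type*} [Field K] [LinearOrder K] [IsStrictOrderedRing K]

theorem mul_sub_mem_Ico_iff {c m p q x : K} (hc : 0 < c) :
    c * x - m ∈ Set.Ico p q ↔ x ∈ Set.Ico ((m + p) / c) ((m + q) / c) := by
  simp only [Set.mem_Ico, div_le_iff₀ hc, lt_div_iff₀ hc]
  constructor <;> rintro ⟨h₁, h₂⟩ <;> constructor <;> linarith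

variable [FloorRing K]

theorem abs_two_mul_ceil_sub_ceil_sub_ceil_le_one {α β γ : K} (h : α + γ = 2 * β) :
    |2 * ⌈β⌉ - ⌈α⌉ - ⌈γ⌉| ≤ 1 := by
  have hlt : ((2 * ⌈β⌉ - ⌈α⌉ - ⌈γ⌉ : ℤ) : K) < 2 := by
    push_cast
    linarith [Int.ceil_lt_add_one β, Int.le_ceil α, Int.le_ceil γ]
  have hgt : (-2 : K) < ((2 * ⌈β⌉ - ⌈α⌉ - ⌈γ⌉ : ℤ) : K) := by
    push_cast
    linarith [Int.le_ceil β, Int.ceil_lt_add_one α, Int.ceil_lt_add_one γ]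
  have hlt' : 2 * ⌈β⌉ - ⌈α⌉ - ⌈γ⌉ < 2 := by exact_mod_cast hlt
  have hgt' : -2 < 2 * ⌈β⌉ - ⌈α⌉ - ⌈γ⌉ := by exact_mod_cast hgt
  rw [abs_le]
  omega

theorem card_filter_range_mem_Ico {T : ℕ} {a b : K} (hb : b ≤ T) :
    #{n ∈ range T | ((n : ℕ) : K) ∈ Set.Ico a b} = ⌈b⌉₊ - ⌈a⌉₊ := by
  rw [← Nat.card_Ico]
  congr 1
  ext n
  simp only [mem_filter, mem_range, Set.mem_Ico, mem_Ico, Nat.ceil_le, Nat.lt_ceil]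
  constructor
  · exact fun h => h.2
  · exact fun h => ⟨by exact_mod_cast h.2.trans_le hb, h⟩

end LinearOrderedField

theorem haarMother_eq_ite_sub_ite (y : ℝ) :
    haarMother y = (if y ∈ Set.Ico 0 (1 / 2) then 1 else 0)
      - (if y ∈ Set.Ico (1 / 2) 1 then 1 else 0) := by
  unfold haarMother
  simp only [Set.mem_Ico]
  split_ifs <;> grind

theorem abs_sum_range_haarMother_mul_sub_le_one {T : ℕ} {c m : ℝ} (hc : 0 < c) (hm : 0 ≤ m)
    (hT : (m + 1) / c ≤ T) : |∑ n ∈ range T, haarMother (c * n - m)| ≤ 1 := by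
  set α := m / c
  set β := (m + 1 / 2) / c
  set γ := (m + 1) / c
  have hαβ : α ≤ β := div_le_div_of_nonneg_right (by linarith) hc.le
  have hβγ : β ≤ γ := div_le_div_of_nonneg_right (by linarith) hc.le
  have hα : 0 ≤ α := by positivity
  have hsum : ∑ n ∈ range T, haarMother (c * n - m)
      = ((⌈β⌉₊ - ⌈α⌉₊ : ℕ) : ℝ) - ((⌈γ⌉₊ - ⌈β⌉₊ : ℕ) : ℝ) := by
    simp only [haarMother_eq_ite_sub_ite, mul_sub_mem_Ico_iff hc, add_zero, sum_sub_distrib,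
      sum_boole]
    rw [card_filter_range_mem_Ico (hβγ.trans hT), card_filter_range_mem_Ico hT]
  rw [hsum, Nat.cast_sub (Nat.ceil_mono hαβ), Nat.cast_sub (Nat.ceil_mono hβγ)]
  have hceil := abs_two_mul_ceil_sub_ceil_sub_ceil_le_one (α := α) (β := β) (γ := γ)
    (by simp only [α, β, γ]; ring)
  rw [← Int.natCast_ceil_eq_ceil hα, ← Int.natCast_ceil_eq_ceil (hα.trans hαβ),
    ← Int.natCast_ceil_eq_ceil (hα.trans (hαβ.trans hβγ))] at hceil
  calc |(⌈β⌉₊ : ℝ) - ⌈α⌉₊ - (⌈γ⌉₊ - ⌈β⌉₊)|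
      = ((|2 * (⌈β⌉₊ : ℤ) - ⌈α⌉₊ - ⌈γ⌉₊| : ℤ) : ℝ) := by push_cast; ring_nf
    _ ≤ 1 := by exact_mod_cast hceil

theorem sum_Icc_one_sub_one_div_eq_sum_range (f : ℝ → ℝ) (T : ℕ) :
    ∑ t ∈ Icc 1 T, f (((t : ℝ) - 1) / T) = ∑ n ∈ range T, f (n / T) := by
  rw [← Ico_add_one_right_eq_Icc, sum_Ico_eq_sum_range]
  simp [add_comm]

/-- partial sums of the discretized composite Haar functions
`Ψ_k(t) = ψ_k((t-1)/T)` grow at most geometrically in the index: there is a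
finite constant `C > 0` such that for every `T ≥ 1` and every `k ≥ 1`,
`|∑_{t=1}^{T} Ψ_k(t)| ≤ C · 2^k`.  Hence the discrete-basis summand bound of
Assumption 1.d holds for the composite Haar basis with `η(k) = 2^k`. -/
theorem haarComposite_partial_sum_bound :
    ∃ C : ℝ, 0 < C ∧ ∀ T k : ℕ, 1 ≤ T → 1 ≤ k →
      |∑ t ∈ Finset.Icc 1 T, haarComposite k (((t : ℝ) - 1) / T)| ≤ C * 2 ^ k := by
  refine ⟨1, one_pos, fun T k hT hk => ?_⟩
  obtain ⟨j, rfl⟩ : ∃ j, k = j + 1 := ⟨k - 1, by omega⟩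
  have hT₀ : (0 : ℝ) < T := by exact_mod_cast hT
  have hc : (0 : ℝ) < 2 ^ j / T := by positivity
  have htranslate : ∀ m ∈ range (2 ^ j),
      |∑ n ∈ range T, haarMother (2 ^ j / T * n - m)| ≤ 1 := fun m hm =>
    abs_sum_range_haarMother_mul_sub_le_one hc m.cast_nonneg (by
      rw [div_div_eq_mul_div, div_le_iff₀ (by positivity), mul_comm]
      gcongr
      exact_mod_cast mem_range.mp hm)
  calc |∑ t ∈ Icc 1 T, haarComposite (j + 1) (((t : ℝ) - 1) / T)|
      = |∑ m ∈ range (2 ^ j), ∑ n ∈ range T, haarMother (2 ^ j / T * n - m)| := by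
        rw [sum_Icc_one_sub_one_div_eq_sum_range, sum_comm]
        simp only [haarComposite, mul_div_assoc', div_mul_eq_mul_div]
    _ ≤ ∑ m ∈ range (2 ^ j), 1 := (abs_sum_le_sum_abs _ _).trans (sum_le_sum htranslate)
    _ ≤ 1 * 2 ^ (j + 1) := by simp [pow_succ]
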